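/- arXiv:2306.14088 — 6 statements merged into one kernel-verified Lean document; each statement's English description precedes it below -/
import Mathlib

section
/- Let G be a nontrivial finite additive group, N ≥ 1, X : Ω → (Fin N → G) be any random variable, and K_1, …, K_N be G-valued random variables that are mutually independent, each uniformly distributed on G, with (K_1, …, K_N) independent of X. Let V_i := X_i + K_i. Then the pair consisting of (V_1, …, V_N) and the aggregate key Σ_{i=1}^N K_i is conditionally independent of X = (X_1, …, X_N) given the aggregate gradient Σ_{i=1}^N X_i. -/
/-!
Write `V = X + K` for the padded gradients and `S = ∑ i, X i` for the aggregate gradient.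
Since the law of `K` is the uniform (hence translation-invariant) measure on `G^N` and `K` is
independent of `X`, the shear `(x, k) ↦ (x, x + k)` shows that `V` is independent of `X`.
Independence of `V` from `X` gives conditional independence given any function of `X`, in
particular given `S`, and adjoining the conditioning variable `S` to `V` keeps it. The observed
pair `(V, ∑ i, K i) = (V, ∑ i, V i - S)` is a function of `(V, S)`.
-/

open MeasureTheory ProbabilityTheory

instance PMF.isAddLeftInvariant_toMeasure_uniformOfFintype (G : Type*) [AddGroup G] [Fintype G]
    [MeasurableSpace G] [MeasurableSingletonClass G] :
    (PMF.uniformOfFintype G).toMeasure.IsAddLeftInvariant where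
  map_add_left_eq_self g := by
    refine Measure.ext_iff_singleton.mpr fun x => ?_
    rw [Measure.map_apply (measurable_of_finite _) (measurableSet_singleton x),
      Set.preimage_add_left_singleton]
    simp only [PMF.toMeasure_apply_singleton _ _ (measurableSet_singleton _),
      PMF.uniformOfFintype_apply]

theorem MeasureTheory.condExp_inter_ae_eq_indicator {Ω : Type*} {m mΩ : MeasurableSpace Ω}
    {μ : Measure Ω} [IsFiniteMeasure μ] {s t : Set Ω} (hs : MeasurableSet s)
    (ht : MeasurableSet[m] t) : μ⟦s ∩ t | m⟧ =ᵐ[μ] t.indicator (μ⟦s | m⟧) := by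
  rw [Set.inter_comm, ← Set.indicator_indicator]
  exact condExp_indicator ((integrable_const 1).indicator hs) ht

namespace ProbabilityTheory

open MeasurableSpace

variable {Ω : Type*} {m' m₁ m₂ mΩ : MeasurableSpace Ω} {μ : Measure Ω}

theorem IndepFun.indepFun_add_of_map_isAddLeftInvariant [IsProbabilityMeasure μ]
    {H : Type*} [AddGroup H] [MeasurableSpace H] [MeasurableAdd₂ H] {X K : Ω → H}
    (hX : Measurable X) (hK : Measurable K) (hXK : IndepFun X K μ)
    (hK_inv : (μ.map K).IsAddLeftInvariant) :
    IndepFun X (fun ω => X ω + K ω) μ := by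
  have h_joint : μ.map (fun ω => (X ω, X ω + K ω)) = (μ.map X).prod (μ.map K) := by
    rw [← (measurePreserving_prod_add (μ.map X) (μ.map K)).map_eq,
      ← hXK.map_prod_eq_prod_map_map hX.aemeasurable hK.aemeasurable,
      Measure.map_map (by fun_prop) (by fun_prop)]
    rfl
  have h_sum : μ.map (fun ω => X ω + K ω) = μ.map K := by
    have := Measure.isProbabilityMeasure_map (μ := μ) hX.aemeasurable
    have h_snd := congrArg (Measure.map Prod.snd) h_joint
    rwa [Measure.map_map measurable_snd (by fun_prop), Measure.map_snd_prod, measure_univ,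
      one_smul] at h_snd
  rw [indepFun_iff_map_prod_eq_prod_map_map hX.aemeasurable (by fun_prop), h_sum, h_joint]

variable [StandardBorelSpace Ω] [IsFiniteMeasure μ]

theorem Indep.condIndep_of_le_right (hm₁ : m₁ ≤ mΩ) (hm₂ : m₂ ≤ mΩ) (hm'₂ : m' ≤ m₂)
    (h : Indep m₁ m₂ μ) : CondIndep m' m₁ m₂ (hm'₂.trans hm₂) μ := by
  rw [condIndep_iff _ _ _ _ hm₁ hm₂]
  intro s t hs ht
  have h_const : ∀ {m : MeasurableSpace Ω} (hm : m ≤ m₂),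
      μ⟦s | m⟧ =ᵐ[μ] fun _ => μ.real s := fun hm =>
    (condExp_indep_eq hm₁ (hm.trans hm₂) (stronglyMeasurable_const.indicator hs)
      (indep_of_indep_of_le_right h hm)).trans
      (.of_forall fun _ => integral_indicator_one (hm₁ _ hs))
  calc μ⟦s ∩ t | m'⟧
      =ᵐ[μ] μ[μ⟦s ∩ t | m₂⟧ | m'] := (condExp_condExp_of_le hm'₂ hm₂).symm
    _ =ᵐ[μ] μ[t.indicator (fun _ => μ.real s) | m'] :=
        condExp_congr_ae ((condExp_inter_ae_eq_indicator (hm₁ _ hs) ht).trans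
          (h_const le_rfl).indicator)
    _ = μ[μ.real s • t.indicator (fun _ => (1 : ℝ)) | m'] := by
        congr 1; ext ω; by_cases hω : ω ∈ t <;> simp [hω]
    _ =ᵐ[μ] (μ⟦s | m'⟧) * (μ⟦t | m'⟧) := by
        refine (condExp_smul _ _ _).trans ?_
        filter_upwards [h_const hm'₂] with ω hω
        simp [hω]

theorem CondIndep.sup_left_conditioning {hm' : m' ≤ mΩ} (hm₁ : m₁ ≤ mΩ) (hm₂ : m₂ ≤ mΩ)
    (h : CondIndep m' m₁ m₂ hm' μ) : CondIndep m' (m₁ ⊔ m') m₂ hm' μ := by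
  set p := Set.image2 (· ∩ ·) {s | MeasurableSet[m₁] s} {s | MeasurableSet[m'] s}
  have hp_pi : IsPiSystem p := by
    rintro _ ⟨a, ha, b, hb, rfl⟩ _ ⟨c, hc, d, hd, rfl⟩ -
    exact ⟨a ∩ c, ha.inter hc, b ∩ d, hb.inter hd, Set.inter_inter_inter_comm a c b d⟩
  have hp_gen : m₁ ⊔ m' = generateFrom p := by
    refine le_antisymm (sup_le (fun a ha => ?_) (fun b hb => ?_))
      (generateFrom_le ?_)
    · exact measurableSet_generateFrom ⟨a, ha, .univ, .univ, Set.inter_univ a⟩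
    · exact measurableSet_generateFrom ⟨.univ, .univ, b, hb, Set.univ_inter b⟩
    · rintro _ ⟨a, ha, b, hb, rfl⟩
      exact (le_sup_left (b := m') _ ha).inter (le_sup_right (a := m₁) _ hb)
  have hp_meas : ∀ s ∈ p, MeasurableSet s := fun s hs =>
    sup_le hm₁ hm' _ (hp_gen ▸ measurableSet_generateFrom hs)
  refine CondIndepSets.condIndep (sup_le hm₁ hm') hm₂ hp_pi (@isPiSystem_measurableSet _ m₂)
    hp_gen (@generateFrom_measurableSet _ m₂).symm ?_
  rw [condIndepSets_iff _ _ p {s | MeasurableSet[m₂] s} hp_meas fun s hs => hm₂ _ hs]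
  rw [condIndep_iff _ _ _ _ hm₁ hm₂] at h
  rintro _ c ⟨a, ha, b, hb, rfl⟩ hc
  have hab := condExp_inter_ae_eq_indicator (μ := μ) (hm₁ _ ha) hb
  have habc : μ⟦a ∩ b ∩ c | m'⟧ =ᵐ[μ] b.indicator (μ⟦a ∩ c | m'⟧) := by
    rw [Set.inter_right_comm]
    exact condExp_inter_ae_eq_indicator ((hm₁ _ ha).inter (hm₂ _ hc)) hb
  filter_upwards [hab, habc, h a c ha hc] with ω hab habc hac
  by_cases hω : ω ∈ b <;> simp_all

end ProbabilityTheory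

theorem padded_gradients_and_aggregate_key_condIndep_given_aggregate_general
    {Ω : Type*} [MeasurableSpace Ω] [StandardBorelSpace Ω]
    (μ : Measure Ω) [IsProbabilityMeasure μ]
    {G : Type*} [AddCommGroup G] [Fintype G]
    [MeasurableSpace G] [MeasurableSingletonClass G]
    {N : ℕ}
    (X : Ω → Fin N → G) (hX : Measurable X)
    (K : Fin N → Ω → G) (hK : ∀ i, Measurable (K i))
    (hKiIndep : iIndepFun K μ)
    (hKunif : ∀ i, Measure.map (K i) μ = (PMF.uniformOfFintype G).toMeasure)
    (hindep : IndepFun (fun ω i => K i ω) X μ) :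
    CondIndepFun (MeasurableSpace.comap (fun ω => ∑ i, X ω i) inferInstance)
      (Measurable.comap_le ((measurable_of_countable fun v : Fin N → G => ∑ i, v i).comp hX))
      (fun ω => ((fun i => X ω i + K i ω), ∑ i, K i ω)) X μ := by
  let V : Ω → Fin N → G := fun ω i => X ω i + K i ω
  let S : Ω → G := fun ω => ∑ i, X ω i
  have hV : Measurable V := by fun_prop
  have hK_law : (μ.map fun ω i => K i ω).IsAddLeftInvariant := by
    rw [hKiIndep.map_fun_eq_pi_map fun i => (hK i).aemeasurable]
    simp_rw [hKunif]
    infer_instance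
  have hVX : IndepFun V X μ :=
    (hindep.symm.indepFun_add_of_map_isAddLeftInvariant hX (measurable_pi_lambda _ hK)
      hK_law).symm
  have hS_le : MeasurableSpace.comap S inferInstance ≤ MeasurableSpace.comap X inferInstance :=
    ((measurable_of_finite fun v : Fin N → G => ∑ i, v i).comp (comap_measurable X)).comap_le
  have h_cond : CondIndep (MeasurableSpace.comap S inferInstance)
      (MeasurableSpace.comap V inferInstance ⊔ MeasurableSpace.comap S inferInstance)
      (MeasurableSpace.comap X inferInstance) (hS_le.trans hX.comap_le) μ :=
    (((IndepFun_iff_Indep _ _ _).mp hVX).condIndep_of_le_right hV.comap_le hX.comap_le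
      hS_le).sup_left_conditioning hV.comap_le hX.comap_le
  rw [condIndepFun_iff_condIndep]
  refine condIndep_of_condIndep_of_le_left h_cond (Measurable.comap_le ?_)
  have h_key : ∀ ω, ∑ i, K i ω = ∑ i, V ω i - S ω := fun ω => by
    simp [V, S, Finset.sum_add_distrib]
  simp_rw [h_key]
  exact (measurable_of_finite fun p : (Fin N → G) × G => (p.1, ∑ i, p.1 i - p.2)).comp
    (((comap_measurable V).mono le_sup_left le_rfl).prodMk
      ((comap_measurable S).mono le_sup_right le_rfl))

/-- Core of Theorem 1, case (ii): the pair consisting of the padded gradients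
`(X 0 + K 0, …, X (N-1) + K (N-1))` together with the aggregate key `∑ i, K i` is
conditionally independent of the gradients `X` given the aggregate gradient `∑ i, X i`. -/
theorem padded_gradients_and_aggregate_key_condIndep_given_aggregate
    {Ω : Type*} [MeasurableSpace Ω] [StandardBorelSpace Ω]
    (μ : Measure Ω) [IsProbabilityMeasure μ]
    {G : Type*} [AddCommGroup G] [Fintype G] [Nontrivial G]
    [MeasurableSpace G] [MeasurableSingletonClass G]
    {N : ℕ} (hN : 1 ≤ N)
    (X : Ω → Fin N → G) (hX : Measurable X)
    (K : Fin N → Ω → G) (hK : ∀ i, Measurable (K i))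
    (hKiIndep : iIndepFun K μ)
    (hKunif : ∀ i, Measure.map (K i) μ = (PMF.uniformOfFintype G).toMeasure)
    (hindep : IndepFun (fun ω i => K i ω) X μ) :
    CondIndepFun (MeasurableSpace.comap (fun ω => ∑ i, X ω i) inferInstance)
      (Measurable.comap_le ((measurable_of_countable fun v : Fin N → G => ∑ i, v i).comp hX))
      (fun ω => ((fun i => X ω i + K i ω), ∑ i, K i ω)) X μ :=
  padded_gradients_and_aggregate_key_condIndep_given_aggregate_general μ X hX K hK hKiIndep hKunif
    hindep
end

section
/- Let F be a nontrivial finite field, let d ≥ 1, n ≥ 1, 0 ≤ t < n be naturals, let m : Fin n → ℕ be share sizes, and let R be a nonempty finite set of randomness. Suppose Enc : (Fin d → F) × R → Π_{j} (Fin (m j) → F) satisfies: (privacy) for every T ⊆ Fin n with |T| = t and all secrets s, s' ∈ F^d, the distribution of the restricted shares (Enc(s, r)_j)_{j∈T} when r is uniform on R equals the corresponding distribution for s'; and (recoverability) there exists Dec with Dec(Enc(s, r)) = s for all s and r. Then for every T ⊆ Fin n with |T| = t, Σ_{j ∉ T} m j ≥ d. -/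
/-- Converse lemma for secret sharing: if a `d`-symbol secret over a finite field `F` is
encoded into `n` shares (share `j` consisting of `m j` field symbols) such that any `t`
shares are distributed identically for all secrets (privacy, with uniform encoding
randomness) and all `n` shares determine the secret (recoverability), then the shares
outside any colluding set of size `t` jointly carry at least `d` field symbols. -/
theorem secret_sharing_share_size_lower_bound
    {F : Type*} [Field F] [Fintype F]
    {d n t : ℕ} (hd : 1 ≤ d) (hn : 1 ≤ n) (htn : t < n)
    (m : Fin n → ℕ)
    {R : Type*} [Fintype R] [Nonempty R]
    (Enc : (Fin d → F) × R → ∀ j, Fin (m j) → F)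
    (privacy : ∀ T : Finset (Fin n), T.card = t → ∀ s s' : Fin d → F,
      PMF.map (fun r => fun j : {j // j ∈ T} => Enc (s, r) j.1)
          (PMF.uniformOfFintype R)
        = PMF.map (fun r => fun j : {j // j ∈ T} => Enc (s', r) j.1)
          (PMF.uniformOfFintype R))
    (recover : ∃ Dec : (∀ j, Fin (m j) → F) → Fin d → F,
      ∀ s r, Dec (Enc (s, r)) = s) :
    ∀ T : Finset (Fin n), T.card = t → d ≤ ∑ j ∈ Tᶜ, m j := by
  classical
  obtain ⟨Dec, hDec⟩ := recover
  intro T hT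
  obtain ⟨r0⟩ := (inferInstance : Nonempty R)
  set y0 : ∀ j : {j // j ∈ T}, Fin (m j.1) → F := fun j => Enc ((fun _ => 0 : Fin d → F), r0) j.1 with hy0
  have hchoice : ∀ s : Fin d → F, ∃ r : R,
      (fun j : {j // j ∈ T} => Enc (s, r) j.1) = y0 := by
    intro s
    have h := privacy T hT s (fun _ => 0)
    have hmem : y0 ∈ (PMF.map
        (fun r => fun j : {j // j ∈ T} => Enc ((fun _ => 0 : Fin d → F), r) j.1)
        (PMF.uniformOfFintype R)).support := by
      rw [PMF.support_map]
      exact ⟨r0, by simp, rfl⟩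
    rw [← h, PMF.support_map] at hmem
    obtain ⟨r, _, hr⟩ := hmem
    exact ⟨r, hr⟩
  choose rc hrc using hchoice
  have hinj : Function.Injective
      (fun s : Fin d → F => fun j : {j // j ∈ Tᶜ} => Enc (s, rc s) j.1) := by
    intro s s' h
    have hfull : Enc (s, rc s) = Enc (s', rc s') := by
      funext j
      by_cases hj : j ∈ T
      · have h1 := congrFun (hrc s) ⟨j, hj⟩
        have h2 := congrFun (hrc s') ⟨j, hj⟩
        simpa using h1.trans h2.symm
      · exact congrFun h ⟨j, Finset.mem_compl.mpr hj⟩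
    calc s = Dec (Enc (s, rc s)) := (hDec s (rc s)).symm
      _ = Dec (Enc (s', rc s')) := by rw [hfull]
      _ = s' := hDec s' (rc s')
  have hcard := Fintype.card_le_of_injective _ hinj
  have hq : 1 < Fintype.card F := Fintype.one_lt_card
  have hL : Fintype.card (Fin d → F) = Fintype.card F ^ d := by
    simp [Fintype.card_fun]
  have hRc : Fintype.card (∀ j : {j // j ∈ Tᶜ}, Fin (m j.1) → F)
      = Fintype.card F ^ (∑ j ∈ Tᶜ, m j) := by
    rw [Fintype.card_pi]
    have : ∀ j : {j // j ∈ Tᶜ}, Fintype.card (Fin (m j.1) → F)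
        = Fintype.card F ^ m j.1 := by
      intro j; simp [Fintype.card_fun]
    rw [Finset.prod_congr rfl (fun j _ => this j)]
    rw [Finset.prod_pow_eq_pow_sum]
    congr 1
    exact Finset.sum_attach Tᶜ m
  rw [hL, hRc] at hcard
  exact (Nat.pow_le_pow_iff_right hq).mp hcard
end

section
/- Let F be a nontrivial finite field, let d ≥ 1, t ≥ 0, v ≥ 1 be naturals, set n := t + v, let m : Fin n → ℕ be share sizes, and let R be a nonempty finite set. Suppose Enc : (Fin d → F) × R → Π_{j} (Fin (m j) → F) satisfies: (privacy) for every T ⊆ Fin n with |T| = t and all secrets s, s' ∈ F^d, the distribution of (Enc(s, r)_j)_{j∈T} when r is uniform on R equals the corresponding distribution for s'; and (recoverability) there exists Dec with Dec(Enc(s, r)) = s for all s and r. Then v · Σ_{j=1}^{n} m j ≥ d · (t + v), i.e., the total number of share symbols is at least d·(t+v)/v. -/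
/-- Per-client communication converse: a `d`-symbol secret shared into `n = t + v` shares
with privacy against any `t` shares and recoverability from all shares requires a total of
at least `d * (t + v) / v` share symbols, i.e. `v * ∑ j, m j ≥ d * (t + v)`. -/
theorem secret_sharing_total_communication_lower_bound
    {F : Type*} [Field F] [Fintype F]
    {d t v : ℕ} (hd : 1 ≤ d) (hv : 1 ≤ v)
    (m : Fin (t + v) → ℕ)
    {R : Type*} [Fintype R] [Nonempty R]
    (Enc : (Fin d → F) × R → ∀ j, Fin (m j) → F)
    (privacy : ∀ T : Finset (Fin (t + v)), T.card = t → ∀ s s' : Fin d → F,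
      PMF.map (fun r => fun j : {j // j ∈ T} => Enc (s, r) j.1)
          (PMF.uniformOfFintype R)
        = PMF.map (fun r => fun j : {j // j ∈ T} => Enc (s', r) j.1)
          (PMF.uniformOfFintype R))
    (recover : ∃ Dec : (∀ j, Fin (m j) → F) → Fin d → F,
      ∀ s r, Dec (Enc (s, r)) = s) :
    d * (t + v) ≤ v * ∑ j, m j := by
  classical
  obtain ⟨Dec, hDec⟩ := recover
  -- Key claim: any set of v shares carries at least d symbols.
  have key : ∀ S : Finset (Fin (t + v)), S.card = v → d ≤ ∑ j ∈ S, m j := by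
    intro S hS
    set T := Sᶜ with hT
    have hTcard : T.card = t := by
      rw [hT, Finset.card_compl, hS, Fintype.card_fin]
      omega
    have r0 : R := Classical.arbitrary R
    set s0 : Fin d → F := fun _ => 0 with hs0
    have hex : ∀ s : Fin d → F, ∃ r : R,
        ∀ j : Fin (t + v), j ∈ T → Enc (s, r) j = Enc (s0, r0) j := by
      intro s
      have h := privacy T hTcard s0 s
      have hmem : (fun j : {j // j ∈ T} => Enc (s0, r0) j.1) ∈
          (PMF.map (fun r => fun j : {j // j ∈ T} => Enc (s0, r) j.1)
            (PMF.uniformOfFintype R)).support := by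
        rw [PMF.support_map]
        exact ⟨r0, by simp, rfl⟩
      rw [h, PMF.support_map] at hmem
      obtain ⟨r, _, hr⟩ := hmem
      exact ⟨r, fun j hj => congrFun hr ⟨j, hj⟩⟩
    choose rfun hrfun using hex
    -- Injection from secrets into the shares on S.
    have hinj : Function.Injective
        (fun s : Fin d → F => fun j : {j // j ∈ S} => Enc (s, rfun s) j.1) := by
      intro s1 s2 h12
      have hfull : Enc (s1, rfun s1) = Enc (s2, rfun s2) := by
        funext j
        by_cases hj : j ∈ S
        · exact congrFun h12 ⟨j, hj⟩
        · have hjT : j ∈ T := Finset.mem_compl.2 hj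
          rw [hrfun s1 j hjT, hrfun s2 j hjT]
      calc s1 = Dec (Enc (s1, rfun s1)) := (hDec s1 (rfun s1)).symm
        _ = Dec (Enc (s2, rfun s2)) := by rw [hfull]
        _ = s2 := hDec s2 (rfun s2)
    have hcard := Fintype.card_le_of_injective _ hinj
    have hL : Fintype.card (Fin d → F) = Fintype.card F ^ d := by
      simp [Fintype.card_fun]
    have hR : Fintype.card (∀ j : {j // j ∈ S}, Fin (m j.1) → F)
        = Fintype.card F ^ (∑ j ∈ S, m j) := by
      rw [Fintype.card_pi]
      rw [← Finset.prod_pow_eq_pow_sum]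
      rw [← Finset.prod_attach S (fun j => Fintype.card F ^ m j)]
      congr 1
      funext j
      simp [Fintype.card_fun]
    rw [hL, hR] at hcard
    exact (Nat.pow_le_pow_iff_right Fintype.one_lt_card).1 hcard
  -- Pick the v indices with the smallest share sizes.
  set σ := Tuple.sort m with hσ
  have hmono : Monotone (m ∘ σ) := Tuple.monotone_sort m
  have hvle : v ≤ t + v := by omega
  set S : Finset (Fin (t + v)) :=
    Finset.image (fun i : Fin v => σ (Fin.castLE hvle i)) Finset.univ with hSdef
  have hinjS : Function.Injective (fun i : Fin v => σ (Fin.castLE hvle i)) := by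
    intro a b hab
    have := σ.injective hab
    exact Fin.castLE_injective hvle this
  have hScard : S.card = v := by
    rw [hSdef, Finset.card_image_of_injective _ hinjS, Finset.card_univ, Fintype.card_fin]
  have hmin : ∀ j ∉ S, ∀ k ∈ S, m k ≤ m j := by
    intro j hj k hk
    obtain ⟨i, _, hi⟩ := Finset.mem_image.1 hk
    have hjix : v ≤ (σ.symm j : ℕ) := by
      by_contra hlt
      push_neg at hlt
      apply hj
      rw [hSdef]
      refine Finset.mem_image.2 ⟨⟨(σ.symm j : ℕ), hlt⟩, Finset.mem_univ _, ?_⟩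
      simp [Fin.castLE]
    have : (Fin.castLE hvle i : Fin (t + v)) ≤ σ.symm j := by
      rw [Fin.le_def]
      simp only [Fin.coe_castLE]
      omega
    have h2 := hmono this
    simpa [hi] using h2
  have hSd : d ≤ ∑ j ∈ S, m j := key S hScard
  have hout : ∀ j ∈ Sᶜ, d ≤ v * m j := by
    intro j hj
    have hj' : j ∉ S := Finset.mem_compl.1 hj
    have : ∑ k ∈ S, m k ≤ ∑ k ∈ S, m j :=
      Finset.sum_le_sum fun k hk => hmin j hj' k hk
    rw [Finset.sum_const, hScard, smul_eq_mul] at this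
    omega
  have hsplit : ∑ j ∈ S, m j + ∑ j ∈ Sᶜ, m j = ∑ j, m j :=
    Finset.sum_add_sum_compl S m
  have hCcard : Sᶜ.card = t := by
    have := Finset.card_compl S
    simp only [Fintype.card_fin, hScard] at this
    omega
  have hc : t * d ≤ v * ∑ j ∈ Sᶜ, m j := by
    have : ∑ j ∈ Sᶜ, d ≤ ∑ j ∈ Sᶜ, v * m j :=
      Finset.sum_le_sum hout
    rw [Finset.sum_const, hCcard, smul_eq_mul] at this
    calc t * d ≤ ∑ j ∈ Sᶜ, v * m j := this
      _ = v * ∑ j ∈ Sᶜ, m j := (Finset.mul_sum _ _ _).symm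
  have hvd : v * d ≤ v * ∑ j ∈ S, m j := Nat.mul_le_mul_left v hSd
  calc d * (t + v) = t * d + v * d := by ring
    _ ≤ v * ∑ j ∈ Sᶜ, m j + v * ∑ j ∈ S, m j := Nat.add_le_add hc hvd
    _ = v * ∑ j, m j := by rw [← Nat.mul_add, Nat.add_comm, hsplit]
end

section
/- Fix naturals d ≥ 1, N ≥ 1, Γ, and t with t < Γ, and B : Fin N → Finset (Fin Γ) with t < |B i| for every client i. Over the rationals define C_UE := d·N + d·Σ_{i=1}^{N} |B i|/(|B i| − t); C_BS := d·(Γ − 1); C_BSF := d + d·Σ_{P ∈ image(B)} |P|/(|P| − t), where image(B) := {B i : i ∈ [N]}; and C_s := C_UE + C_BS + C_BSF. Then C_s ≥ d·(N + Γ + (N+1)·Γ/(Γ − t)). -/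
lemma ratio_lower {Γ t c : ℕ} (ht : t < Γ) (hc : t < c) (hcΓ : c ≤ Γ) :
    (Γ : ℚ) / ((Γ : ℚ) - t) ≤ (c : ℚ) / ((c : ℚ) - t) := by
  have h1 : (0:ℚ) < (Γ:ℚ) - t := by
    have : (t:ℚ) < (Γ:ℚ) := by exact_mod_cast ht
    linarith
  have h2 : (0:ℚ) < (c:ℚ) - t := by
    have : (t:ℚ) < (c:ℚ) := by exact_mod_cast hc
    linarith
  rw [div_le_div_iff₀ h1 h2]
  have hcΓ' : (c:ℚ) ≤ Γ := by exact_mod_cast hcΓ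
  have htn : (0:ℚ) ≤ t := by positivity
  nlinarith

/-- Lower bound of inequality (3) in Theorem 3: the total communication cost
`C_s = C_UE + C_BS + C_BSF` of the private aggregation scheme is at least
`d * (N + Γ + (N + 1) * Γ / (Γ - t))`. -/
theorem scheme_communication_cost_lower_bound
    {d N Γ t : ℕ} (hd : 1 ≤ d) (hN : 1 ≤ N) (ht : t < Γ)
    (B : Fin N → Finset (Fin Γ)) (hB : ∀ i, t < (B i).card) :
    (d : ℚ) * ((N : ℚ) + Γ + ((N : ℚ) + 1) * Γ / ((Γ : ℚ) - t)) ≤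
      (((d : ℚ) * N + d * ∑ i : Fin N, ((B i).card : ℚ) / (((B i).card : ℚ) - t))
        + (d : ℚ) * ((Γ : ℚ) - 1)
        + ((d : ℚ) + d * ∑ P ∈ Finset.univ.image B,
            ((P.card : ℚ) / ((P.card : ℚ) - t)))) := by
  have hΓt : (0:ℚ) < (Γ:ℚ) - t := by
    have : (t:ℚ) < (Γ:ℚ) := by exact_mod_cast ht
    linarith
  have hcard : ∀ i : Fin N, (B i).card ≤ Γ := fun i =>
    (Finset.card_le_card (Finset.subset_univ _)).trans (by simp)
  have hd1 : (1:ℚ) ≤ d := by exact_mod_cast hd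
  have hdpos : (0:ℚ) ≤ d := by linarith
  -- sum over clients
  have hsum1 : (N:ℚ) * ((Γ:ℚ)/((Γ:ℚ)-t)) ≤
      ∑ i : Fin N, ((B i).card : ℚ) / (((B i).card : ℚ) - t) := by
    calc (N:ℚ) * ((Γ:ℚ)/((Γ:ℚ)-t))
        = ∑ _i : Fin N, (Γ:ℚ)/((Γ:ℚ)-t) := by simp [mul_comm]
      _ ≤ _ := Finset.sum_le_sum fun i _ => ratio_lower ht (hB i) (hcard i)
  -- sum over image
  have hmem : B ⟨0, hN⟩ ∈ Finset.univ.image B := Finset.mem_image_of_mem _ (Finset.mem_univ _)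
  have hsum2 : (Γ:ℚ)/((Γ:ℚ)-t) ≤
      ∑ P ∈ Finset.univ.image B, ((P.card : ℚ) / ((P.card : ℚ) - t)) := by
    have hnn : ∀ P ∈ Finset.univ.image B, (0:ℚ) ≤ (P.card:ℚ)/((P.card:ℚ)-t) := by
      intro P hP
      obtain ⟨i, _, rfl⟩ := Finset.mem_image.mp hP
      have h2 : (0:ℚ) < ((B i).card:ℚ) - t := by
        have : (t:ℚ) < ((B i).card:ℚ) := by exact_mod_cast hB i
        linarith
      positivity
    exact le_trans (ratio_lower ht (hB ⟨0, hN⟩) (hcard _)) (Finset.single_le_sum hnn hmem)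
  have key : ((N:ℚ)+1) * (Γ:ℚ) / ((Γ:ℚ)-t) = (N:ℚ) * ((Γ:ℚ)/((Γ:ℚ)-t)) + (Γ:ℚ)/((Γ:ℚ)-t) := by
    field_simp
  nlinarith [mul_le_mul_of_nonneg_left hsum1 hdpos, mul_le_mul_of_nonneg_left hsum2 hdpos, key]
end

section
/- Fix naturals d ≥ 1, N, Γ, and t, and B : Fin N → Finset (Fin Γ) with t < |B i| for every client i. Over the rationals define C_UE := d·N + d·Σ_{i=1}^{N} |B i|/(|B i| − t); C_BS := d·(Γ − 1); C_BSF := d + d·Σ_{P ∈ image(B)} |P|/(|P| − t), where image(B) := {B i : i ∈ [N]}; C_s := C_UE + C_BS + C_BSF; and S := d·Σ_{i=1}^{N} |B i|/(|B i| − t). Then C_s − d·N − d·Γ ≤ 2 · S. -/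
theorem scheme_excess_cost_upper_bound_general
    {d N Γ t : ℕ}
    (B : Fin N → Finset (Fin Γ)) (hB : ∀ i, t < (B i).card) :
    ((((d : ℚ) * N + d * ∑ i : Fin N, ((B i).card : ℚ) / (((B i).card : ℚ) - t))
          + (d : ℚ) * ((Γ : ℚ) - 1)
          + ((d : ℚ) + d * ∑ P ∈ Finset.univ.image B,
              ((P.card : ℚ) / ((P.card : ℚ) - t))))
        - (d : ℚ) * N - (d : ℚ) * Γ)
      ≤ 2 * ((d : ℚ) * ∑ i : Fin N, ((B i).card : ℚ) / (((B i).card : ℚ) - t)) := by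
  set load : Finset (Fin Γ) → ℚ := fun P ↦ (P.card : ℚ) / ((P.card : ℚ) - t)
  have hload_nonneg : ∀ P ∈ Finset.univ.image B, 0 ≤ load P := by
    intro P hP
    obtain ⟨i, -, rfl⟩ := Finset.mem_image.mp hP
    have ht : (t : ℚ) < (B i).card := by exact_mod_cast hB i
    exact div_nonneg (Nat.cast_nonneg _) (sub_nonneg.mpr ht.le)
  have hfederator : ∑ P ∈ Finset.univ.image B, load P ≤ ∑ i, load (B i) :=
    Finset.sum_image_le_of_nonneg hload_nonneg
  calc _ = (d : ℚ) * ∑ i, load (B i) + d * ∑ P ∈ Finset.univ.image B, load P := by ring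
    _ ≤ (d : ℚ) * ∑ i, load (B i) + d * ∑ i, load (B i) := by gcongr
    _ = _ := by ring

/-- Upper bound of inequality (4) in Theorem 3: the communication cost of the scheme in
excess of the fixed terms `d * N` and `d * Γ` is at most a factor `β = 2` times the total
secret-sharing load `S = d * ∑ i, |B i| / (|B i| - t)`. -/
theorem scheme_excess_cost_upper_bound
    {d N Γ t : ℕ} (hd : 1 ≤ d)
    (B : Fin N → Finset (Fin Γ)) (hB : ∀ i, t < (B i).card) :
    ((((d : ℚ) * N + d * ∑ i : Fin N, ((B i).card : ℚ) / (((B i).card : ℚ) - t))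
          + (d : ℚ) * ((Γ : ℚ) - 1)
          + ((d : ℚ) + d * ∑ P ∈ Finset.univ.image B,
              ((P.card : ℚ) / ((P.card : ℚ) - t))))
        - (d : ℚ) * N - (d : ℚ) * Γ)
      ≤ 2 * ((d : ℚ) * ∑ i : Fin N, ((B i).card : ℚ) / (((B i).card : ℚ) - t)) :=
  scheme_excess_cost_upper_bound_general B hB
end

section
/- Fix naturals d ≥ 1, N ≥ 1, Γ, and t, and B : Fin N → Finset (Fin Γ) with t < |B i| for every client i. Over the rationals define C_UE := d·N + d·Σ_{i=1}^{N} |B i|/(|B i| − t); C_BS := d·(Γ − 1); C_BSF := d + d·Σ_{P ∈ image(B)} |P|/(|P| − t), where image(B) := {B i : i ∈ [N]}; C_s := C_UE + C_BS + C_BSF; and C⋆ := d·(max_{i∈[N]} |B i|/(|B i| − t) + Σ_{i=1}^{N} |B i|/(|B i| − t)). Then C_s < (3 + (Γ − t)/(N + 1)) · C⋆. -/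
/-- Final claim of Theorem 3: the communication cost `C_s` of the proposed scheme exceeds
the fundamental lower bound
`C⋆ = d * (max_i |B i| / (|B i| - t) + ∑ i, |B i| / (|B i| - t))`
by a multiplicative factor strictly less than `3 + (Γ - t) / (N + 1)`. -/
theorem scheme_cost_vs_fundamental_lower_bound
    {d N Γ t : ℕ} (hd : 1 ≤ d) (hN : 1 ≤ N)
    (B : Fin N → Finset (Fin Γ)) (hB : ∀ i, t < (B i).card) :
    (((d : ℚ) * N + d * ∑ i : Fin N, ((B i).card : ℚ) / (((B i).card : ℚ) - t))
        + (d : ℚ) * ((Γ : ℚ) - 1)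
        + ((d : ℚ) + d * ∑ P ∈ Finset.univ.image B,
            ((P.card : ℚ) / ((P.card : ℚ) - t))))
      < (3 + ((Γ : ℚ) - t) / ((N : ℚ) + 1))
        * ((d : ℚ) * ((Finset.univ.sup' (Finset.univ_nonempty_iff.mpr ⟨⟨0, hN⟩⟩)
              fun i : Fin N => ((B i).card : ℚ) / (((B i).card : ℚ) - t))
            + ∑ i : Fin N, ((B i).card : ℚ) / (((B i).card : ℚ) - t))) := by
  set g : Finset (Fin Γ) → ℚ := fun P => ((P.card : ℚ) / ((P.card : ℚ) - t)) with hg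
  set f : Fin N → ℚ := fun i => ((B i).card : ℚ) / (((B i).card : ℚ) - t) with hf
  set S : ℚ := ∑ i : Fin N, f i with hS
  set M : ℚ := Finset.univ.sup' (Finset.univ_nonempty_iff.mpr ⟨⟨0, hN⟩⟩) f with hM
  -- basic facts
  have hΓt : t < Γ := lt_of_lt_of_le (hB ⟨0, hN⟩) (by
    simpa using Finset.card_le_card (Finset.subset_univ (B ⟨0, hN⟩)))
  have hden : ∀ i, (0 : ℚ) < ((B i).card : ℚ) - t := by
    intro i
    have := hB i
    have : (t : ℚ) < ((B i).card : ℚ) := by exact_mod_cast this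
    linarith
  have hf1 : ∀ i, (1 : ℚ) ≤ f i := by
    intro i
    rw [hf, le_div_iff₀ (hden i)]
    have : (0:ℚ) ≤ (t:ℚ) := by positivity
    linarith
  have hcardΓ : ∀ i, ((B i).card : ℚ) ≤ (Γ : ℚ) := by
    intro i
    exact_mod_cast (by simpa using Finset.card_le_card (Finset.subset_univ (B i)) :
      (B i).card ≤ Γ)
  have hΓtQ : (0:ℚ) < (Γ:ℚ) - t := by
    have : (t:ℚ) < (Γ:ℚ) := by exact_mod_cast hΓt
    linarith
  -- each f i ≥ Γ/(Γ-t)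
  have hflow : ∀ i, (Γ : ℚ) / ((Γ:ℚ) - t) ≤ f i := by
    intro i
    rw [hf, div_le_div_iff₀ hΓtQ (hden i)]
    have h1 := hcardΓ i
    have h2 : (0:ℚ) ≤ (t:ℚ) := by positivity
    nlinarith
  have hMge : ∀ i : Fin N, f i ≤ M := by
    intro i
    rw [hM]
    exact Finset.le_sup' f (Finset.mem_univ i)
  have hMlow : (Γ : ℚ) / ((Γ:ℚ) - t) ≤ M := le_trans (hflow ⟨0, hN⟩) (hMge ⟨0, hN⟩)
  have hM1 : (1:ℚ) ≤ M := le_trans (hf1 ⟨0, hN⟩) (hMge ⟨0, hN⟩)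
  have hMΓ : (Γ:ℚ) ≤ M * ((Γ:ℚ) - t) := by
    have := (div_le_iff₀ hΓtQ).mp hMlow
    linarith
  have hSlow : (N:ℚ) * (Γ:ℚ) ≤ S * ((Γ:ℚ) - t) := by
    have h : (N:ℚ) * ((Γ:ℚ) / ((Γ:ℚ) - t)) ≤ S := by
      rw [hS]
      calc (N:ℚ) * ((Γ:ℚ) / ((Γ:ℚ) - t))
          = ∑ _i : Fin N, (Γ:ℚ) / ((Γ:ℚ) - t) := by
            simp [Finset.sum_const, mul_comm]
        _ ≤ ∑ i : Fin N, f i := Finset.sum_le_sum fun i _ => hflow i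
    have h2 := mul_le_mul_of_nonneg_right h hΓtQ.le
    rw [mul_assoc, div_mul_cancel₀ _ (ne_of_gt hΓtQ)] at h2
    exact h2
  have hNS : (N:ℚ) ≤ S := by
    rw [hS]
    calc (N:ℚ) = ∑ _i : Fin N, (1:ℚ) := by simp
      _ ≤ ∑ i : Fin N, f i := Finset.sum_le_sum fun i _ => hf1 i
  -- sum over image ≤ S
  have himg : (∑ P ∈ Finset.univ.image B, g P) ≤ S := by
    have key : (∑ P ∈ Finset.univ.image B, g P)
        ≤ ∑ P ∈ Finset.univ.image B, ∑ i ∈ Finset.univ.filter (fun i => B i = P), f i := by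
      apply Finset.sum_le_sum
      intro P hP
      obtain ⟨i, _, hiP⟩ := Finset.mem_image.mp hP
      have hmem : i ∈ Finset.univ.filter (fun j => B j = P) := by
        simp [hiP]
      have : g P = f i := by rw [hg, hf]; simp [hiP]
      rw [this]
      exact Finset.single_le_sum (fun j _ => le_trans zero_le_one (hf1 j)) hmem
    have heq : (∑ P ∈ Finset.univ.image B,
        ∑ i ∈ Finset.univ.filter (fun i => B i = P), f i) = S := by
      rw [hS]
      exact Finset.sum_fiberwise_of_maps_to (fun i _ => Finset.mem_image_of_mem B (Finset.mem_univ i)) f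
    linarith
  -- the term with division
  have hNpos : (0:ℚ) < (N:ℚ) + 1 := by positivity
  have hq : (Γ:ℚ) ≤ ((Γ:ℚ) - t) / ((N:ℚ) + 1) * (M + S) := by
    rw [div_mul_eq_mul_div, le_div_iff₀ hNpos]
    nlinarith [hMΓ, hSlow]
  have hdpos : (0:ℚ) < (d:ℚ) := by exact_mod_cast hd
  have hq' : (d:ℚ) * (Γ:ℚ) ≤ ((Γ:ℚ) - t) / ((N:ℚ) + 1) * ((d:ℚ) * (M + S)) := by
    have := mul_le_mul_of_nonneg_left hq hdpos.le
    nlinarith [this]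
  have himg' : (d:ℚ) * (∑ P ∈ Finset.univ.image B, g P) ≤ (d:ℚ) * S :=
    mul_le_mul_of_nonneg_left himg hdpos.le
  have hNS' : (d:ℚ) * (N:ℚ) ≤ (d:ℚ) * S := mul_le_mul_of_nonneg_left hNS hdpos.le
  have hM' : (d:ℚ) ≤ (d:ℚ) * M := by nlinarith
  have hdM : (0:ℚ) < (d:ℚ) * M := lt_of_lt_of_le hdpos hM'
  have hrw : (3 + ((Γ : ℚ) - t) / ((N : ℚ) + 1)) * ((d:ℚ) * (M + S))
      = 3 * ((d:ℚ) * M) + 3 * ((d:ℚ) * S) + ((Γ : ℚ) - t) / ((N : ℚ) + 1) * ((d:ℚ) * (M + S)) := by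
    ring
  rw [hrw]
  linarith [hq', himg', hNS', hdM]
end
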